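/- arXiv:1703.10635 — 2 statements merged into one kernel-verified Lean document; each statement's English description precedes it below -/
import Mathlib

section
/- Let ℒ ⊂ ℝ^{n+1} be a lattice, y0 > 0, and v ∈ ℝ^n. Every function g ∈ Π_{y0}(𝒳_ℒ) is invariant under translation by v (that is, g(x − v) = g(x) for all x ∈ ℝ^n) if and only if one of the following holds: (I) (v,0) ∈ ℒ; or (II) (0,y0) ∈ ℒ and (v,y1) ∈ ℒ for some y1 ∈ ℝ. -/
open MeasureTheory
open scoped Classical

noncomputable section

/-- The Euclidean dot product on `ℝⁿ`. -/
def dotn {n : ℕ} (a b : Fin n → ℝ) : ℝ := ∑ i, a i * b i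

/-- `ℝ^{n+1}` viewed as `ℝⁿ × ℝ`, points written `(x, y)`. -/
abbrev V1 (n : ℕ) := (Fin n → ℝ) × ℝ

/-- The standard inner product on `ℝ^{n+1} = ℝⁿ × ℝ`. -/
def dot1 {n : ℕ} (k p : V1 n) : ℝ := dotn k.1 p.1 + k.2 * p.2

/-- `e^{2πit}`. -/
def expz (t : ℝ) : ℂ := Complex.exp (2 * (Real.pi : ℂ) * Complex.I * (t : ℂ))

/-- The wave `ω_k` on `ℝ^{n+1}`. -/
def wave {n : ℕ} (k : V1 n) : V1 n → ℂ := fun p => expz (dot1 k p)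

/-- The wave `ω_k̃` on `ℝⁿ`. -/
def waveN {n : ℕ} (k : Fin n → ℝ) : (Fin n → ℝ) → ℂ := fun x => expz (dotn k x)

/-- The projection operator `Π_{y0}`. -/
def Proj {n : ℕ} (y0 : ℝ) (f : V1 n → ℂ) : (Fin n → ℝ) → ℂ :=
  fun x => ∫ y in (0:ℝ)..y0, f (x, y)

/-- The lattice generated over `ℤ` by the vectors `b i`. -/
def latticeOf {n : ℕ} (b : Fin (n+1) → V1 n) : Set (V1 n) :=
  {v | ∃ c : Fin (n+1) → ℤ, v = ∑ i, (c i : ℝ) • b i}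

/-- The dual lattice `ℒ*` of a subset of `ℝ^{n+1}`. -/
def dualLat {n : ℕ} (L : Set (V1 n)) : Set (V1 n) :=
  {k | ∀ l ∈ L, ∃ m : ℤ, dot1 k l = (m : ℝ)}

/-- The dual lattice of a subset of `ℝⁿ`. -/
def dualN {n : ℕ} (Lt : Set (Fin n → ℝ)) : Set (Fin n → ℝ) :=
  {k | ∀ v ∈ Lt, ∃ m : ℤ, dotn k v = (m : ℝ)}

/-- `𝒳_ℒ`: the ℂ-linear span of the waves `ω_k`, `k ∈ ℒ*`. -/
def XL {n : ℕ} (L : Set (V1 n)) : Submodule ℂ (V1 n → ℂ) :=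
  Submodule.span ℂ (wave '' dualLat L)

/-- The ℂ-linear span of the waves `ω_k̃`, `k̃` in the dual of a planar lattice. -/
def XN {n : ℕ} (Lt : Set (Fin n → ℝ)) : Submodule ℂ ((Fin n → ℝ) → ℂ) :=
  Submodule.span ℂ (waveN '' dualN Lt)

/-- Membership in `O(n)`: a linear automorphism of `ℝⁿ` preserving the dot product. -/
def IsOrthoN {n : ℕ} (α : (Fin n → ℝ) ≃ₗ[ℝ] (Fin n → ℝ)) : Prop :=
  ∀ a b, dotn (α a) (α b) = dotn a b

/-- Membership in `O(n+1)`: a linear automorphism of `ℝ^{n+1}` preserving the inner product. -/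
def IsOrtho1 {n : ℕ} (δ : V1 n ≃ₗ[ℝ] V1 n) : Prop :=
  ∀ a b, dot1 (δ a) (δ b) = dot1 a b

/-- The holohedry `H_ℒ`: orthogonal transformations mapping `ℒ` to itself. -/
def HolL {n : ℕ} (L : Set (V1 n)) : Set (V1 n ≃ₗ[ℝ] V1 n) :=
  {γ | IsOrtho1 γ ∧ (⇑γ) '' L = L}

/-- `α₊`: acts as `α` on `ℝⁿ` and `+1` on the last coordinate. -/
def aPlus {n : ℕ} (α : (Fin n → ℝ) ≃ₗ[ℝ] (Fin n → ℝ)) : V1 n ≃ₗ[ℝ] V1 n :=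
  α.prodCongr (LinearEquiv.refl ℝ ℝ)

/-- `α₋`: acts as `α` on `ℝⁿ` and `−1` on the last coordinate. -/
def aMinus {n : ℕ} (α : (Fin n → ℝ) ≃ₗ[ℝ] (Fin n → ℝ)) : V1 n ≃ₗ[ℝ] V1 n :=
  α.prodCongr (LinearEquiv.neg ℝ)

/-- The group `J̃` of induced orthogonal symmetries. -/
def Jt {n : ℕ} (L : Set (V1 n)) (y0 : ℝ) : Set ((Fin n → ℝ) ≃ₗ[ℝ] (Fin n → ℝ)) :=
  {α | IsOrthoN α ∧
    (aPlus α ∈ HolL L ∨ ((((0 : Fin n → ℝ), y0) : V1 n) ∈ L ∧ aMinus α ∈ HolL L))}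

/-- The subset `J̃↑` of `H_ℒ`. -/
def Jup {n : ℕ} (L : Set (V1 n)) (y0 : ℝ) : Set (V1 n ≃ₗ[ℝ] V1 n) :=
  {γ | ∃ α ∈ Jt L y0,
    (γ = aPlus α ∧ aPlus α ∈ HolL L) ∨ (γ = aMinus α ∧ aMinus α ∈ HolL L)}

/-- The set `J^α_k = {δ ∈ H_ℒ : P(δk) = α k̃}`. -/
def Jset {n : ℕ} (L : Set (V1 n)) (k : V1 n) (α : (Fin n → ℝ) ≃ₗ[ℝ] (Fin n → ℝ)) :
    Set (V1 n ≃ₗ[ℝ] V1 n) :=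
  {δ ∈ HolL L | (δ k).1 = α k.1}

/-- The set `J^{Id}_k = {δ ∈ H_ℒ : P(δk) = k̃}`. -/
def JId {n : ℕ} (L : Set (V1 n)) (k : V1 n) : Set (V1 n ≃ₗ[ℝ] V1 n) :=
  {δ ∈ HolL L | (δ k).1 = k.1}

/-- The set `S_k = ⋃_{α ∈ J̃} J^α_k`. -/
def Sk {n : ℕ} (L : Set (V1 n)) (y0 : ℝ) (k : V1 n) : Set (V1 n ≃ₗ[ℝ] V1 n) :=
  ⋃ α ∈ Jt L y0, Jset L k α

/-- The isotropy subgroup `Σ_k` of `k` in `H_ℒ`. -/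
def Sigk {n : ℕ} (L : Set (V1 n)) (k : V1 n) : Set (V1 n ≃ₗ[ℝ] V1 n) :=
  {δ ∈ HolL L | δ k = k}

/-- The orbit `H_ℒ·k`. -/
def HOrb {n : ℕ} (L : Set (V1 n)) (k : V1 n) : Set (V1 n) :=
  (fun δ : V1 n ≃ₗ[ℝ] V1 n => δ k) '' HolL L

/-- The orbit `J̃·u`. -/
def JOrb {n : ℕ} (L : Set (V1 n)) (y0 : ℝ) (u : Fin n → ℝ) : Set (Fin n → ℝ) :=
  (fun α : (Fin n → ℝ) ≃ₗ[ℝ] (Fin n → ℝ) => α u) '' Jt L y0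

/-- The single mode `V`: the ℂ-span of the waves `ω_{δk}`, `δ ∈ H_ℒ`. -/
def modeV {n : ℕ} (L : Set (V1 n)) (k : V1 n) : Submodule ℂ (V1 n → ℂ) :=
  Submodule.span ℂ ((fun δ : V1 n ≃ₗ[ℝ] V1 n => wave (δ k)) '' HolL L)

/-- The projected lattice `𝓛̃`. -/
def projLat {n : ℕ} (L : Set (V1 n)) (y0 : ℝ) : Set (Fin n → ℝ) :=
  if (((0 : Fin n → ℝ), y0) : V1 n) ∈ L then Prod.fst '' L
  else Prod.fst '' (L ∩ {p : V1 n | p.2 = 0})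

/-!
A single wave projects to `Π_{y0} ω_k (x) = ω_{k̃}(x) · ∫₀^{y0} e(k_y y) dy`, and the integral
vanishes exactly when `k_y ≠ 0` and `k_y y0 ∈ ℤ`. As `Π_{y0}` is linear, every function of
`Π_{y0}(𝒳_ℒ)` is `v`-invariant iff each `k ∈ ℒ*` has `k̃·v ∈ ℤ`, or `k_y ≠ 0` and `k_y y0 ∈ ℤ`.

By the duality `ℒ** = ℒ` this is a condition on `ℒ`. If all `k ∈ ℒ*` have `k̃·v ∈ ℤ`, then
`(v,0) ∈ ℒ`. Otherwise one `k₀` with `k̃₀·v ∉ ℤ` forces `k_y y0 ∈ ℤ` for every `k ∈ ℒ*` (apply the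
condition to `k` and `k + k₀`), i.e. `(0,y0) ∈ ℒ`. The values `k_y y0` then form a cyclic group
`dℤ`, and on the kernel of `k ↦ k_y` the condition gives `k̃·v ∈ ℤ`; splitting off a multiple of
some `k₁` with `k₁_y y0 = d` yields `y1` with `k̃·v + k_y y1 ∈ ℤ` for all `k ∈ ℒ*`, i.e.
`(v,y1) ∈ ℒ`.
-/

lemma dotn_add_left {n : ℕ} (a b c : Fin n → ℝ) : dotn (a + b) c = dotn a c + dotn b c :=
  add_dotProduct a b c

lemma dotn_sub_right {n : ℕ} (a x v : Fin n → ℝ) : dotn a (x - v) = dotn a x - dotn a v :=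
  dotProduct_sub a x v

def ProjWaveInvariant {n : ℕ} (y0 : ℝ) (v : Fin n → ℝ) (k : V1 n) : Prop :=
  (∃ m : ℤ, dotn k.1 v = m) ∨ (k.2 ≠ 0 ∧ ∃ m : ℤ, k.2 * y0 = m)

lemma expz_add (a b : ℝ) : expz (a + b) = expz a * expz b := by
  rw [expz, expz, expz, ← Complex.exp_add]
  push_cast
  ring_nf

lemma expz_eq_one_iff (t : ℝ) : expz t = 1 ↔ ∃ m : ℤ, t = m := by
  have h2πi : 2 * (Real.pi : ℂ) * Complex.I ≠ 0 := by simp [Real.pi_ne_zero]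
  rw [expz, Complex.exp_eq_one_iff]
  refine exists_congr fun m => ?_
  rw [mul_comm (m : ℂ), mul_right_inj' h2πi]
  norm_cast

lemma continuous_expz : Continuous expz := by
  unfold expz
  fun_prop

lemma proj_wave {n : ℕ} (y0 : ℝ) (k : V1 n) (x : Fin n → ℝ) :
    Proj y0 (wave k) x = waveN k.1 x * ∫ y in (0:ℝ)..y0, expz (k.2 * y) := by
  simp only [Proj, wave, waveN, dot1, expz_add, intervalIntegral.integral_const_mul]

lemma integral_expz_eq_zero_iff {y0 : ℝ} (hy0 : y0 ≠ 0) (κ : ℝ) :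
    (∫ y in (0:ℝ)..y0, expz (κ * y)) = 0 ↔ κ ≠ 0 ∧ ∃ m : ℤ, κ * y0 = m := by
  rcases eq_or_ne κ 0 with rfl | hκ
  · simp [expz, hy0]
  set c : ℂ := 2 * Real.pi * Complex.I * κ
  have hc : c ≠ 0 := by simp [c, Real.pi_ne_zero, hκ]
  have hexp (y : ℝ) : expz (κ * y) = Complex.exp (c * y) := by
    simp only [expz, c]
    push_cast
    ring_nf
  simp only [hexp, integral_exp_mul_complex hc, div_eq_zero_iff, hc, or_false, sub_eq_zero,
    Complex.ofReal_zero, mul_zero, Complex.exp_zero, ← expz_eq_one_iff, ne_eq, hκ,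
    not_false_eq_true, true_and]

lemma waveN_sub_mul_expz {n : ℕ} (a x v : Fin n → ℝ) :
    waveN a (x - v) * expz (dotn a v) = waveN a x := by
  rw [waveN, waveN, ← expz_add, dotn_sub_right, sub_add_cancel]

lemma proj_wave_sub_eq_iff {n : ℕ} {y0 : ℝ} (hy0 : y0 ≠ 0) (k : V1 n) (v : Fin n → ℝ) :
    (∀ x, Proj y0 (wave k) (x - v) = Proj y0 (wave k) x) ↔ ProjWaveInvariant y0 v k := by
  rw [ProjWaveInvariant, ← integral_expz_eq_zero_iff hy0, ← expz_eq_one_iff]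
  simp only [proj_wave]
  set I := ∫ y in (0:ℝ)..y0, expz (k.2 * y)
  constructor
  · intro h
    by_cases hI : I = 0
    · exact Or.inr hI
    have h0 : waveN k.1 0 = 1 := by simp [waveN, expz, dotn]
    have hv := h v
    rw [sub_self] at hv
    exact Or.inl ((mul_right_cancel₀ hI hv).symm.trans h0)
  · rintro (h | h) x
    · rw [← waveN_sub_mul_expz k.1 x v, h, mul_one]
    · rw [h, mul_zero, mul_zero]

section Linearity

variable {n : ℕ} {y0 : ℝ}

lemma proj_add {f g : V1 n → ℂ} (hf : Continuous f) (hg : Continuous g) :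
    Proj y0 (f + g) = Proj y0 f + Proj y0 g := by
  funext x
  exact intervalIntegral.integral_add
    ((hf.comp (Continuous.prodMk_right x)).intervalIntegrable _ _)
    ((hg.comp (Continuous.prodMk_right x)).intervalIntegrable _ _)

lemma proj_smul (c : ℂ) (f : V1 n → ℂ) : Proj y0 (c • f) = c • Proj y0 f := by
  funext x
  exact intervalIntegral.integral_smul c _

lemma proj_sub_eq_of_mem_span {S : Set (V1 n → ℂ)} {v : Fin n → ℝ}
    (hS : ∀ f ∈ S, Continuous f ∧ ∀ x, Proj y0 f (x - v) = Proj y0 f x)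
    {f : V1 n → ℂ} (hf : f ∈ Submodule.span ℂ S) (x : Fin n → ℝ) :
    Proj y0 f (x - v) = Proj y0 f x := by
  suffices Continuous f ∧ ∀ x, Proj y0 f (x - v) = Proj y0 f x from this.2 x
  induction hf using Submodule.span_induction with
  | mem f hf => exact hS f hf
  | zero => exact ⟨continuous_const, fun x => by simp [Proj]⟩
  | add f g _ _ hf hg =>
    refine ⟨hf.1.add hg.1, fun x => ?_⟩
    simp only [proj_add hf.1 hg.1, Pi.add_apply, hf.2, hg.2]
  | smul c f _ hf =>
    refine ⟨hf.1.const_smul c, fun x => ?_⟩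
    simp only [proj_smul, Pi.smul_apply, hf.2]

end Linearity

lemma continuous_wave {n : ℕ} (k : V1 n) : Continuous (wave k) := by
  unfold wave dot1 dotn
  exact continuous_expz.comp (by fun_prop)

lemma forall_XL_proj_sub_eq_iff {n : ℕ} {y0 : ℝ} (hy0 : y0 ≠ 0) (L : Set (V1 n))
    (v : Fin n → ℝ) :
    (∀ f ∈ XL L, ∀ x, Proj y0 f (x - v) = Proj y0 f x) ↔
      ∀ k ∈ dualLat L, ProjWaveInvariant y0 v k := by
  refine ⟨fun h k hk => ?_, fun h f hf => ?_⟩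
  · exact (proj_wave_sub_eq_iff hy0 k v).mp (h _ (Submodule.subset_span ⟨k, hk, rfl⟩))
  · refine proj_sub_eq_of_mem_span ?_ hf
    rintro _ ⟨k, hk, rfl⟩
    exact ⟨continuous_wave k, (proj_wave_sub_eq_iff hy0 k v).mpr (h k hk)⟩

def dotForm (n : ℕ) : LinearMap.BilinForm ℝ (V1 n) :=
  (dotProductBilin ℝ ℝ).compl₁₂ (.fst ℝ _ ℝ) (.fst ℝ _ ℝ) +
    (LinearMap.mul ℝ ℝ).compl₁₂ (.snd ℝ _ ℝ) (.snd ℝ _ ℝ)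

@[simp] lemma dotForm_apply {n : ℕ} (k p : V1 n) : dotForm n k p = dot1 k p := rfl

lemma dot1_self_eq_zero {n : ℕ} {k : V1 n} (h : dot1 k k = 0) : k = 0 := by
  have h1 : 0 ≤ k.1 ⬝ᵥ k.1 := by simpa using dotProduct_self_star_nonneg k.1
  have h2 : dot1 k k = k.1 ⬝ᵥ k.1 + k.2 * k.2 := rfl
  have h3 : k.1 ⬝ᵥ k.1 = 0 := by nlinarith [mul_self_nonneg k.2]
  have h4 : k.2 * k.2 = 0 := by nlinarith [mul_self_nonneg k.2]
  exact Prod.ext (dotProduct_self_eq_zero.mp h3) (mul_self_eq_zero.mp h4)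

lemma dotForm_nondegenerate (n : ℕ) : (dotForm n).Nondegenerate :=
  ⟨fun k hk => dot1_self_eq_zero (hk k), fun p hp => dot1_self_eq_zero (hp p)⟩

lemma latticeOf_eq_span {n : ℕ} (b : Fin (n+1) → V1 n) :
    latticeOf b = (Submodule.span ℤ (Set.range b) : Set (V1 n)) := by
  ext p
  rw [SetLike.mem_coe, Submodule.mem_span_range_iff_exists_fun]
  simp only [latticeOf, Set.mem_ofPred_eq, Int.cast_smul_eq_zsmul, eq_comm]

lemma dualLat_eq_dualSubmodule {n : ℕ} (N : Submodule ℤ (V1 n)) :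
    dualLat (N : Set (V1 n)) = (dotForm n).dualSubmodule N := by
  ext k
  simp only [dualLat, Set.mem_ofPred_eq, SetLike.mem_coe,
    LinearMap.BilinForm.mem_dualSubmodule, Submodule.mem_one, dotForm_apply, eq_comm,
    algebraMap_int_eq, eq_intCast]

lemma mem_latticeOf_iff_forall_dualLat {n : ℕ} {b : Fin (n+1) → V1 n}
    (hb : LinearIndependent ℝ b) (p : V1 n) :
    p ∈ latticeOf b ↔ ∀ k ∈ dualLat (latticeOf b), ∃ m : ℤ, dot1 k p = m := by
  let B := basisOfLinearIndependentOfCardEqFinrank hb (by simp)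
  have hB : ⇑B = b := coe_basisOfLinearIndependentOfCardEqFinrank hb _
  have hdual := (dotForm n).dualSubmodule_flip_dualSubmodule_of_basis (R := ℤ)
    (dotForm_nondegenerate n) B
  rw [hB] at hdual
  rw [latticeOf_eq_span, dualLat_eq_dualSubmodule, SetLike.mem_coe]
  conv_lhs => rw [← hdual]
  simp only [LinearMap.BilinForm.mem_dualSubmodule, Submodule.mem_one, algebraMap_int_eq,
    eq_intCast, SetLike.mem_coe, dotForm_apply]
  exact forall₂_congr fun _ _ => exists_congr fun _ => eq_comm

lemma exists_forall_add_mul_eq_int {G : Type*} [AddCommGroup G] (φ ψ : G →+ ℝ)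
    (hφ : ∀ g, ∃ m : ℤ, φ g = m) (hψ : ∀ g, φ g = 0 → ∃ m : ℤ, ψ g = m) :
    ∃ t : ℝ, ∀ g, ∃ m : ℤ, ψ g + t * φ g = m := by
  obtain ⟨d, hd⟩ := Int.subgroup_cyclic (φ.range.comap (Int.castAddHom ℝ))
  have hd_range : d ∈ φ.range.comap (Int.castAddHom ℝ) :=
    hd ▸ AddSubgroup.mem_closure_singleton_self d
  obtain ⟨g₁, hg₁⟩ := hd_range
  refine ⟨-ψ g₁ / d, fun g => ?_⟩
  obtain ⟨m, hm⟩ := hφ g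
  have hm_range : m ∈ φ.range.comap (Int.castAddHom ℝ) := ⟨g, hm⟩
  rw [hd, AddSubgroup.mem_closure_singleton] at hm_range
  obtain ⟨j, rfl⟩ := hm_range
  by_cases hd0 : (d : ℝ) = 0
  · have hg : φ g = 0 := by simp [hm, hd0]
    simpa [hg] using hψ g hg
  · obtain ⟨m', hm'⟩ := hψ (g - j • g₁) (by simp [hm, hg₁])
    refine ⟨m', ?_⟩
    simp only [map_sub, map_zsmul, zsmul_eq_mul] at hm'
    rw [hm, ← hm', smul_eq_mul, Int.cast_mul]
    field_simp
    ring

def dualLattice {n : ℕ} (b : Fin (n+1) → V1 n) : Submodule ℤ (V1 n) :=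
  (dotForm n).dualSubmodule (Submodule.span ℤ (Set.range b))

lemma mem_dualLattice {n : ℕ} {b : Fin (n+1) → V1 n} {k : V1 n} :
    k ∈ dualLattice b ↔ k ∈ dualLat (latticeOf b) := by
  rw [latticeOf_eq_span, dualLat_eq_dualSubmodule]
  rfl

section Lattice

variable {n : ℕ} {b : Fin (n+1) → V1 n} {y0 : ℝ} {v : Fin n → ℝ}

lemma snd_mul_eq_int_of_not_dotn_eq_int
    (hC : ∀ k ∈ dualLat (latticeOf b), ProjWaveInvariant y0 v k)
    {k₀ : V1 n} (hk₀ : k₀ ∈ dualLat (latticeOf b)) (hk₀v : ¬∃ m : ℤ, dotn k₀.1 v = m) :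
    ∀ k ∈ dualLat (latticeOf b), ∃ m : ℤ, k.2 * y0 = m := by
  have snd_of_not : ∀ k ∈ dualLat (latticeOf b), (¬∃ m : ℤ, dotn k.1 v = m) →
      ∃ m : ℤ, k.2 * y0 = m := fun k hk hkv => ((hC k hk).resolve_left hkv).2
  intro k hk
  by_cases hkv : ∃ m : ℤ, dotn k.1 v = m
  · -- then `k + k₀` fails the first alternative, and `k.2 = (k + k₀).2 - k₀.2`
    obtain ⟨m, hm⟩ := hkv
    have hsum : k + k₀ ∈ dualLat (latticeOf b) := by
      rw [← mem_dualLattice] at *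
      exact add_mem hk hk₀
    have hsumv : ¬∃ m : ℤ, dotn (k + k₀).1 v = m := by
      rintro ⟨m', hm'⟩
      refine hk₀v ⟨m' - m, ?_⟩
      rw [Prod.fst_add, dotn_add_left] at hm'
      push_cast
      linarith
    obtain ⟨m₁, hm₁⟩ := snd_of_not _ hsum hsumv
    obtain ⟨m₀, hm₀⟩ := snd_of_not _ hk₀ hk₀v
    refine ⟨m₁ - m₀, ?_⟩
    simp only [Prod.snd_add, add_mul] at hm₁
    push_cast
    linarith
  · exact snd_of_not k hk hkv

lemma lattice_memberships_of_forall_projWaveInvariant (hb : LinearIndependent ℝ b)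
    (hy0 : y0 ≠ 0) (hC : ∀ k ∈ dualLat (latticeOf b), ProjWaveInvariant y0 v k) :
    ((v, (0:ℝ)) : V1 n) ∈ latticeOf b ∨
      ((((0 : Fin n → ℝ), y0) : V1 n) ∈ latticeOf b ∧
        ∃ y1 : ℝ, ((v, y1) : V1 n) ∈ latticeOf b) := by
  simp only [mem_latticeOf_iff_forall_dualLat hb]
  by_cases hv : ∀ k ∈ dualLat (latticeOf b), ∃ m : ℤ, dotn k.1 v = m
  · left
    intro k hk
    simpa [dot1] using hv k hk
  obtain ⟨k₀, hk₀, hk₀v⟩ := not_forall₂.mp hv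
  have hsnd := snd_mul_eq_int_of_not_dotn_eq_int hC hk₀ hk₀v
  refine Or.inr ⟨fun k hk => by simpa [dot1, dotn] using hsnd k hk, ?_⟩
  let φ : dualLattice b →+ ℝ :=
    AddMonoidHom.mk' (fun k => (k : V1 n).2 * y0) fun k k' => by simp [add_mul]
  let ψ : dualLattice b →+ ℝ :=
    AddMonoidHom.mk' (fun k => dotn (k : V1 n).1 v) fun k k' => by simp [dotn_add_left]
  have hφ (k : dualLattice b) : ∃ m : ℤ, φ k = m := hsnd k (mem_dualLattice.mp k.2)
  have hψ (k : dualLattice b) (hk : φ k = 0) : ∃ m : ℤ, ψ k = m := by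
    have hk2 : (k : V1 n).2 = 0 := (mul_eq_zero.mp hk).resolve_right hy0
    exact ((hC k (mem_dualLattice.mp k.2)).resolve_right fun h => h.1 hk2)
  obtain ⟨t, ht⟩ := exists_forall_add_mul_eq_int φ ψ hφ hψ
  refine ⟨t * y0, fun k hk => ?_⟩
  obtain ⟨m, hm⟩ := ht ⟨k, mem_dualLattice.mpr hk⟩
  refine ⟨m, ?_⟩
  rw [← hm]
  simp only [dot1, φ, ψ, AddMonoidHom.mk'_apply]
  ring

lemma forall_projWaveInvariant_of_lattice_memberships
    (h : ((v, (0:ℝ)) : V1 n) ∈ latticeOf b ∨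
      ((((0 : Fin n → ℝ), y0) : V1 n) ∈ latticeOf b ∧
        ∃ y1 : ℝ, ((v, y1) : V1 n) ∈ latticeOf b)) :
    ∀ k ∈ dualLat (latticeOf b), ProjWaveInvariant y0 v k := by
  intro k hk
  rcases h with hv | ⟨h0y0, y1, hvy1⟩
  · left
    simpa [dot1] using hk _ hv
  by_cases hk2 : k.2 = 0
  · left
    simpa [dot1, hk2] using hk _ hvy1
  · right
    exact ⟨hk2, by simpa [dot1, dotn] using hk _ h0y0⟩

end Lattice

theorem stmt_1_general (n : ℕ) (b : Fin (n+1) → V1 n) (hb : LinearIndependent ℝ b)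
    (y0 : ℝ) (hy0 : 0 < y0) (v : Fin n → ℝ) :
    (∀ f ∈ XL (latticeOf b), ∀ x : Fin n → ℝ, Proj y0 f (x - v) = Proj y0 f x) ↔
      (((v, (0:ℝ)) : V1 n) ∈ latticeOf b ∨
        ((((0 : Fin n → ℝ), y0) : V1 n) ∈ latticeOf b ∧
          ∃ y1 : ℝ, ((v, y1) : V1 n) ∈ latticeOf b)) := by
  rw [forall_XL_proj_sub_eq_iff hy0.ne']
  exact ⟨lattice_memberships_of_forall_projWaveInvariant hb hy0.ne',
    forall_projWaveInvariant_of_lattice_memberships⟩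

/-- every function in `Π_{y0}(𝒳_ℒ)` is invariant under translation by `v`
iff `(v,0) ∈ ℒ`, or `(0,y0) ∈ ℒ` and `(v,y1) ∈ ℒ` for some `y1`. -/
theorem stmt_1 (n : ℕ) (hn : 1 ≤ n) (b : Fin (n+1) → V1 n) (hb : LinearIndependent ℝ b)
    (y0 : ℝ) (hy0 : 0 < y0) (v : Fin n → ℝ) :
    (∀ f ∈ XL (latticeOf b), ∀ x : Fin n → ℝ, Proj y0 f (x - v) = Proj y0 f x) ↔
      (((v, (0:ℝ)) : V1 n) ∈ latticeOf b ∨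
        ((((0 : Fin n → ℝ), y0) : V1 n) ∈ latticeOf b ∧
          ∃ y1 : ℝ, ((v, y1) : V1 n) ∈ latticeOf b)) :=
  stmt_1_general n b hb y0 hy0 v

end
end

section
/- Let ℒ ⊂ ℝ^{n+1} be a lattice, y0 > 0, and k ∈ ℒ*. Let δ ∈ H_ℒ, α ∈ J̃, and let γ ∈ H_ℒ be equal to α_+ or to α_−. If γδ ∈ S_k then δ ∈ S_k. -/
open MeasureTheory
open scoped Classical

noncomputable section

/-! Write `γ = α±`. Then `P(γδk) = α P(δk)`, so `P(γδk) = β k̃` with `β ∈ J̃` gives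
`P(δk) = α⁻¹β k̃`, and `α⁻¹β ∈ J̃` because `J̃` is a group: `α ↦ α±` is multiplicative up to
the product of the signs, and `(0, y0) ∈ ℒ` is available whenever a `−` sign occurs. -/

section Holohedry

variable {n : ℕ} {L : Set (V1 n)}

lemma isOrthoN_mul {α β : (Fin n → ℝ) ≃ₗ[ℝ] (Fin n → ℝ)} (hα : IsOrthoN α) (hβ : IsOrthoN β) :
    IsOrthoN (α * β) := fun a b => by
  rw [LinearEquiv.mul_apply, LinearEquiv.mul_apply, hα, hβ]

lemma isOrthoN_inv {α : (Fin n → ℝ) ≃ₗ[ℝ] (Fin n → ℝ)} (hα : IsOrthoN α) :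
    IsOrthoN α⁻¹ := fun a b => by
  simpa using (hα (α⁻¹ a) (α⁻¹ b)).symm

lemma mul_mem_holL {γ δ : V1 n ≃ₗ[ℝ] V1 n} (hγ : γ ∈ HolL L) (hδ : δ ∈ HolL L) :
    γ * δ ∈ HolL L := by
  refine ⟨fun a b => ?_, ?_⟩
  · simp only [LinearEquiv.mul_apply, hγ.1 _ _, hδ.1 a b]
  · change (γ ∘ δ) '' L = L
    rw [Set.image_comp, hδ.2, hγ.2]

lemma inv_mem_holL {γ : V1 n ≃ₗ[ℝ] V1 n} (hγ : γ ∈ HolL L) : γ⁻¹ ∈ HolL L := by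
  refine ⟨fun a b => by simpa using (hγ.1 (γ⁻¹ a) (γ⁻¹ b)).symm, ?_⟩
  conv_lhs => rw [← hγ.2, ← Set.image_comp]
  simp

end Holohedry

section Lifts

variable {n : ℕ} (α β : (Fin n → ℝ) ≃ₗ[ℝ] (Fin n → ℝ))

@[simp] lemma aPlus_apply_fst (x : V1 n) : (aPlus α x).1 = α x.1 := rfl

@[simp] lemma aMinus_apply_fst (x : V1 n) : (aMinus α x).1 = α x.1 := rfl

lemma aPlus_inv : aPlus α⁻¹ = (aPlus α)⁻¹ := rfl

lemma aMinus_inv : aMinus α⁻¹ = (aMinus α)⁻¹ := rfl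

lemma aPlus_mul_aPlus : aPlus α * aPlus β = aPlus (α * β) := rfl

lemma aPlus_mul_aMinus : aPlus α * aMinus β = aMinus (α * β) := rfl

lemma aMinus_mul_aPlus : aMinus α * aPlus β = aMinus (α * β) := rfl

lemma aMinus_mul_aMinus : aMinus α * aMinus β = aPlus (α * β) := by
  ext x <;> simp [aPlus, aMinus]

end Lifts

section InducedSymmetries

variable {n : ℕ} {L : Set (V1 n)} {y0 : ℝ} {α β : (Fin n → ℝ) ≃ₗ[ℝ] (Fin n → ℝ)}

lemma inv_mem_Jt (hα : α ∈ Jt L y0) : α⁻¹ ∈ Jt L y0 := by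
  obtain ⟨hαo, hαp | ⟨h0, hαm⟩⟩ := hα
  · exact ⟨isOrthoN_inv hαo, .inl (aPlus_inv α ▸ inv_mem_holL hαp)⟩
  · exact ⟨isOrthoN_inv hαo, .inr ⟨h0, aMinus_inv α ▸ inv_mem_holL hαm⟩⟩

lemma mul_mem_Jt (hα : α ∈ Jt L y0) (hβ : β ∈ Jt L y0) : α * β ∈ Jt L y0 := by
  obtain ⟨hαo, hαp | ⟨h0, hαm⟩⟩ := hα <;> obtain ⟨hβo, hβp | ⟨h0', hβm⟩⟩ := hβ <;>
    refine ⟨isOrthoN_mul hαo hβo, ?_⟩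
  · exact .inl (aPlus_mul_aPlus α β ▸ mul_mem_holL hαp hβp)
  · exact .inr ⟨h0', aPlus_mul_aMinus α β ▸ mul_mem_holL hαp hβm⟩
  · exact .inr ⟨h0, aMinus_mul_aPlus α β ▸ mul_mem_holL hαm hβp⟩
  · exact .inl (aMinus_mul_aMinus α β ▸ mul_mem_holL hαm hβm)

lemma mem_Sk {k : V1 n} {δ : V1 n ≃ₗ[ℝ] V1 n} :
    δ ∈ Sk L y0 k ↔ δ ∈ HolL L ∧ ∃ α ∈ Jt L y0, (δ k).1 = α k.1 := by
  simp [Sk, Jset]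

end InducedSymmetries

theorem stmt_12_general (n : ℕ) (b : Fin (n+1) → V1 n)
    (y0 : ℝ) (k : V1 n)
    (δ : V1 n ≃ₗ[ℝ] V1 n) (hδ : δ ∈ HolL (latticeOf b))
    (α : (Fin n → ℝ) ≃ₗ[ℝ] (Fin n → ℝ)) (hα : α ∈ Jt (latticeOf b) y0)
    (γ : V1 n ≃ₗ[ℝ] V1 n)
    (hγeq : γ = aPlus α ∨ γ = aMinus α)
    (hmem : γ * δ ∈ Sk (latticeOf b) y0 k) :
    δ ∈ Sk (latticeOf b) y0 k := by
  obtain ⟨-, β, hβ, hγδk⟩ := mem_Sk.mp hmem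
  have hγ_fst : ∀ x, (γ x).1 = α x.1 := by
    rcases hγeq with rfl | rfl <;> simp
  refine mem_Sk.mpr ⟨hδ, α⁻¹ * β, mul_mem_Jt (inv_mem_Jt hα) hβ, ?_⟩
  calc (δ k).1 = α⁻¹ (γ (δ k)).1 := by simp [hγ_fst]
    _ = (α⁻¹ * β) k.1 := by rw [← LinearEquiv.mul_apply γ, hγδk]; rfl

/-- if `γ ∈ H_ℒ` equals `α₊` or `α₋` for some `α ∈ J̃`, and `γδ ∈ S_k`,
then `δ ∈ S_k`. -/
theorem stmt_12 (n : ℕ) (hn : 1 ≤ n) (b : Fin (n+1) → V1 n) (hb : LinearIndependent ℝ b)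
    (y0 : ℝ) (hy0 : 0 < y0) (k : V1 n) (hk : k ∈ dualLat (latticeOf b))
    (δ : V1 n ≃ₗ[ℝ] V1 n) (hδ : δ ∈ HolL (latticeOf b))
    (α : (Fin n → ℝ) ≃ₗ[ℝ] (Fin n → ℝ)) (hα : α ∈ Jt (latticeOf b) y0)
    (γ : V1 n ≃ₗ[ℝ] V1 n) (hγ : γ ∈ HolL (latticeOf b))
    (hγeq : γ = aPlus α ∨ γ = aMinus α)
    (hmem : γ * δ ∈ Sk (latticeOf b) y0 k) :
    δ ∈ Sk (latticeOf b) y0 k :=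
  stmt_12_general n b y0 k δ hδ α hα γ hγeq hmem

end
end
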